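/- Let S be a nonempty finite set, p ∈ ℕ, m : S → ℝ^{p×p} a family of matrices, and C a convex subset of the real p×p matrices containing m(s) for every s ∈ S. Let Ψ : ℝ^{p×p} → ℝ be convex on C, let w* : S → [0,1] be weights with Σ_{s∈S} w*_s = 1, and set M* := Σ_{s∈S} w*_s m(s). Assume Ψ is Fréchet differentiable at M* with derivative L, and let ε ≥ 0. If L(m(s) − M*) ≥ −ε for every s ∈ S, then for every weight function w : S → [0,1] with Σ_{s∈S} w_s = 1 one has Ψ(M*) ≤ Ψ(Σ_{s∈S} w_s m(s)) + ε. -/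

import Mathlib

/-!
Convexity of `Ψ` gives the gradient inequality `L (M - M*) ≤ Ψ M - Ψ M*` for every `M` in `C`.
For `M = Σₛ wₛ m(s)` the left side is `Σₛ wₛ L (m(s) - M*)`, a convex combination of numbers
that are all at least `-ε`.
-/

attribute [local instance] Matrix.normedAddCommGroup Matrix.normedSpace

theorem ConvexOn.apply_sub_le_sub_of_hasFDerivAt {E : Type*} [NormedAddCommGroup E]
    [NormedSpace ℝ E] {s : Set E} {f : E → ℝ} {f' : E →L[ℝ] ℝ} {x y : E}
    (hf : ConvexOn ℝ s f) (hx : x ∈ s) (hy : y ∈ s) (hf' : HasFDerivAt f f' x) :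
    f' (y - x) ≤ f y - f x := by
  set g : ℝ →ᵃ[ℝ] E := AffineMap.lineMap x y
  have hline : ConvexOn ℝ (g ⁻¹' s) (f ∘ g) := hf.comp_affineMap g
  have hx' : (0 : ℝ) ∈ g ⁻¹' s := by simpa [g] using hx
  have hy' : (1 : ℝ) ∈ g ⁻¹' s := by simpa [g] using hy
  have hderiv : HasDerivAt (f ∘ g) (f' (y - x)) 0 := by
    refine HasFDerivAt.comp_hasDerivAt (0 : ℝ) ?_ AffineMap.hasDerivAt_lineMap
    simpa [g] using hf'
  simpa [g, slope_def_field] using hline.le_slope_of_hasDerivAt hx' hy' zero_lt_one hderiv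

theorem LinearMap.le_apply_sum_smul_sub {𝕜 E ι : Type*} [Field 𝕜] [LinearOrder 𝕜]
    [IsStrictOrderedRing 𝕜] [AddCommGroup E] [Module 𝕜 E] (L : E →ₗ[𝕜] 𝕜) {t : Finset ι}
    {w : ι → 𝕜} (hw₀ : ∀ i ∈ t, 0 ≤ w i) (hw₁ : ∑ i ∈ t, w i = 1) {z : ι → E} {x : E} {c : 𝕜}
    (hc : ∀ i ∈ t, c ≤ L (z i - x)) :
    c ≤ L (∑ i ∈ t, w i • z i - x) := by
  have hmem := (convex_halfSpace_ge L.isLinear (c + L x)).sum_mem hw₀ hw₁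
    (z := z) fun i hi => by simpa [map_sub, ← le_sub_iff_add_le] using hc i hi
  simpa [map_sub, ← le_sub_iff_add_le] using hmem

theorem sensitivity_certificate_eps_optimality_general
    {S : Type*} [Fintype S] {p : ℕ}
    (m : S → Matrix (Fin p) (Fin p) ℝ)
    (C : Set (Matrix (Fin p) (Fin p) ℝ))
    (hmC : ∀ s, m s ∈ C)
    (Ψ : Matrix (Fin p) (Fin p) ℝ → ℝ) (hΨ : ConvexOn ℝ C Ψ)
    (wstar : S → ℝ) (hwstar : ∀ s, wstar s ∈ Set.Icc (0 : ℝ) 1)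
    (hwstarsum : ∑ s, wstar s = 1)
    (Mstar : Matrix (Fin p) (Fin p) ℝ) (hMstar : Mstar = ∑ s, wstar s • m s)
    (L : Matrix (Fin p) (Fin p) ℝ →L[ℝ] ℝ) (hL : HasFDerivAt Ψ L Mstar)
    (ε : ℝ)
    (hviol : ∀ s, -ε ≤ L (m s - Mstar)) :
    ∀ w : S → ℝ, (∀ s, w s ∈ Set.Icc (0 : ℝ) 1) → ∑ s, w s = 1 →
      Ψ Mstar ≤ Ψ (∑ s, w s • m s) + ε := by
  intro w hw hwsum
  have hmixture_mem : ∀ v : S → ℝ, (∀ s, v s ∈ Set.Icc (0 : ℝ) 1) → ∑ s, v s = 1 →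
      ∑ s, v s • m s ∈ C := fun v hv hvsum =>
    hΨ.1.sum_mem (fun s _ => (hv s).1) hvsum fun s _ => hmC s
  have hMstarC : Mstar ∈ C := hMstar ▸ hmixture_mem wstar hwstar hwstarsum
  have hdirectional : -ε ≤ L (∑ s, w s • m s - Mstar) :=
    L.toLinearMap.le_apply_sum_smul_sub (fun s _ => (hw s).1) hwsum fun s _ => hviol s
  have hgradient : L (∑ s, w s • m s - Mstar) ≤ Ψ (∑ s, w s • m s) - Ψ Mstar :=
    hΨ.apply_sub_le_sub_of_hasFDerivAt hMstarC (hmixture_mem w hw hwsum) hL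
  linarith

/-- ε-optimality certificate via the sensitivity function: if the convex design criterion
`Ψ` is differentiable at `M* = Σₛ w*ₛ m(s)` with derivative `L` and
`L (m s - M*) ≥ -ε` for all `s`, then the weighted design `w*` is ε-optimal. -/
theorem sensitivity_certificate_eps_optimality
    {S : Type*} [Fintype S] [Nonempty S] {p : ℕ}
    (m : S → Matrix (Fin p) (Fin p) ℝ)
    (C : Set (Matrix (Fin p) (Fin p) ℝ)) (hC : Convex ℝ C)
    (hmC : ∀ s, m s ∈ C)
    (Ψ : Matrix (Fin p) (Fin p) ℝ → ℝ) (hΨ : ConvexOn ℝ C Ψ)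
    (wstar : S → ℝ) (hwstar : ∀ s, wstar s ∈ Set.Icc (0 : ℝ) 1)
    (hwstarsum : ∑ s, wstar s = 1)
    (Mstar : Matrix (Fin p) (Fin p) ℝ) (hMstar : Mstar = ∑ s, wstar s • m s)
    (L : Matrix (Fin p) (Fin p) ℝ →L[ℝ] ℝ) (hL : HasFDerivAt Ψ L Mstar)
    (ε : ℝ) (hε : 0 ≤ ε)
    (hviol : ∀ s, -ε ≤ L (m s - Mstar)) :
    ∀ w : S → ℝ, (∀ s, w s ∈ Set.Icc (0 : ℝ) 1) → ∑ s, w s = 1 →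
      Ψ Mstar ≤ Ψ (∑ s, w s • m s) + ε :=
  sensitivity_certificate_eps_optimality_general m C hmC Ψ hΨ wstar hwstar hwstarsum Mstar hMstar L
    hL ε hviol
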